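/- (Simultaneous row and column expansion; projection-matrix expansion.) Let M ∈ ℝ^{D_S×D_S} and b ∈ ℝ^{D_S}, let k = ⌊D_T/D_S⌋ and r = D_T mod D_S. Let N = [M¹, …, M^k, M^res] ∈ ℝ^{D_S×D_T} be a column-circular expansion of M, i.e. M^res + ∑_{i=1}^k Mⁱ[:, :r] = M[:, :r] and ∑_{i=1}^k Mⁱ[:, r:] = M[:, r:]. Let M** ∈ ℝ^{D_T×D_T} be the row-average expansion of N, i.e. M**[i,:] = N[i mod D_S,:] for i < k·D_S and M**[i,:] = (1/D_S)·∑_{j<D_S} N[j,:] for k·D_S ≤ i < D_T. Then for every x ∈ ℝ^{D_S}, M**·V_circ(x) + V_avg(b) = V_avg(M·x + b). -/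

import Mathlib

/-- Index bound for the tail part of an expansion from dimension `DS` to `DT`. -/
theorem sub_lt_mod (DS DT i : ℕ) (hDS : 0 < DS) (hi : i < DT) (h2 : DT / DS * DS ≤ i) :
    i - DT / DS * DS < DT % DS := by
  have h := Nat.div_add_mod' DT DS
  set m := DT / DS * DS
  omega

/-- Average expansion `V_avg` from `ℝ^{DS}` to `ℝ^{DT}`. -/
noncomputable def vAvg (DS DT : ℕ) (hDS : 0 < DS) (x : Fin DS → ℝ) : Fin DT → ℝ :=
  fun i => if i.val < DT / DS * DS then x ⟨i.val % DS, Nat.mod_lt _ hDS⟩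
           else (∑ j, x j) / (DS : ℝ)

/-- Zero expansion `V_zero` from `ℝ^{DS}` to `ℝ^{DT}`. -/
def vZero (DS DT : ℕ) (hDS : 0 < DS) (x : Fin DS → ℝ) : Fin DT → ℝ :=
  fun i => if i.val < DT / DS * DS then x ⟨i.val % DS, Nat.mod_lt _ hDS⟩ else 0

/-- Circular expansion `V_circ` from `ℝ^{DS}` to `ℝ^{DT}`. -/
def vCirc (DS DT : ℕ) (hDS : 0 < DS) (x : Fin DS → ℝ) : Fin DT → ℝ :=
  fun i => x ⟨i.val % DS, Nat.mod_lt _ hDS⟩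

/-- Mean of a vector. -/
noncomputable def meanV {D : ℕ} (x : Fin D → ℝ) : ℝ := (∑ i, x i) / (D : ℝ)

/-- Population variance of a vector. -/
noncomputable def varV {D : ℕ} (x : Fin D → ℝ) : ℝ := (∑ i, (x i - meanV x) ^ 2) / (D : ℝ)

/-- Matrix column-circular expansion: the horizontal concatenation
`[M¹, …, M^k, M^res] ∈ ℝ^{P×D_T}` of `k = ⌊D_T/D_S⌋` blocks and a residual block. -/
noncomputable def colCirc (DS DT P : ℕ) (hDS : 0 < DS)
    (Ms : Fin (DT / DS) → Matrix (Fin P) (Fin DS) ℝ)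
    (Mres : Matrix (Fin P) (Fin (DT % DS)) ℝ) : Matrix (Fin P) (Fin DT) ℝ :=
  fun i j => if h : j.val < DT / DS * DS
    then Ms ⟨j.val / DS, (Nat.div_lt_iff_lt_mul hDS).mpr h⟩ i ⟨j.val % DS, Nat.mod_lt _ hDS⟩
    else Mres i ⟨j.val - DT / DS * DS, sub_lt_mod DS DT j.val hDS j.isLt (Nat.not_lt.mp h)⟩

/-- Matrix row-average expansion: repeat the rows of `N` cyclically for the first
`⌊D_T/D_S⌋·D_S` rows and fill the remaining rows with the row average of `N`. -/
noncomputable def rowAvg (DS DT P : ℕ) (hDS : 0 < DS) (N : Matrix (Fin DS) (Fin P) ℝ) :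
    Matrix (Fin DT) (Fin P) ℝ :=
  fun i j => if i.val < DT / DS * DS then N ⟨i.val % DS, Nat.mod_lt _ hDS⟩ j
             else (∑ l, N l j) / (DS : ℝ)

/-! Under the circular expansion, column `j` of `N` meets the entry `x (j mod D_S)`, so
`N · V_circ x` pairs every block `Mⁱ` with `x` and `M^res` with the first `r` entries of `x`;
the defining identities of a column-circular expansion say that these contributions add up to
`M · x`. Row-average expansion commutes with applying a matrix, `M** · v = V_avg (N · v)`, and
`V_avg` is additive, so both sides equal `V_avg (M · x) + V_avg b`. -/

namespace Fin

variable {D n : ℕ}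

def blockIdx (l : Fin (n / D)) (s : Fin D) : Fin n :=
  (finProdFinEquiv (l, s)).castLE (Nat.div_mul_le_self n D)

def tailIdx (t : Fin (n % D)) : Fin n :=
  (t.natAdd (n / D * D)).cast (Nat.div_add_mod' n D)

theorem val_blockIdx (l : Fin (n / D)) (s : Fin D) : (blockIdx l s : ℕ) = s + D * l := rfl

theorem val_tailIdx (t : Fin (n % D)) : (tailIdx t : ℕ) = n / D * D + t := rfl

theorem blockIdx_lt_div_mul (l : Fin (n / D)) (s : Fin D) : (blockIdx l s : ℕ) < n / D * D :=
  (finProdFinEquiv (l, s)).isLt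

theorem sum_eq_sum_blockIdx_add_sum_tailIdx {M : Type*} [AddCommMonoid M] (f : Fin n → M) :
    ∑ j, f j =
      ∑ l : Fin (n / D), ∑ s : Fin D, f (blockIdx l s) + ∑ t : Fin (n % D), f (tailIdx t) := by
  rw [← Fin.sum_congr' f (Nat.div_add_mod' n D), Fin.sum_univ_add,
    ← finProdFinEquiv.sum_comp, Fintype.sum_prod_type]
  rfl

end Fin

open Fin Matrix

theorem Matrix.sum_mulVec_add_mulVec_comp_castLE {R ι : Type*} [Ring R] [Fintype ι] {P r D : ℕ}
    (hr : r ≤ D) (M : Matrix (Fin P) (Fin D) R) (Ms : ι → Matrix (Fin P) (Fin D) R)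
    (Mres : Matrix (Fin P) (Fin r) R)
    (hres : ∀ i j, Mres i j + ∑ l, Ms l i (Fin.castLE hr j) = M i (Fin.castLE hr j))
    (hrest : ∀ i (j : Fin D), r ≤ j.val → ∑ l, Ms l i j = M i j) (x : Fin D → R) :
    (∑ l, Ms l) *ᵥ x + Mres *ᵥ (x ∘ Fin.castLE hr) = M *ᵥ x := by
  have hMres : Mres *ᵥ (x ∘ Fin.castLE hr) = (M - ∑ l, Ms l) *ᵥ x := by
    ext i
    refine Fintype.sum_of_injective (Fin.castLE hr) (Fin.castLE_injective hr) _ _ ?_ ?_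
    · intro j hj
      have hrj : r ≤ j.val := by
        by_contra! h
        exact hj ⟨⟨j, h⟩, rfl⟩
      simp [sum_apply, hrest i j hrj]
    · intro j
      simp [sum_apply, ← hres i j]
  rw [hMres, ← add_mulVec, add_sub_cancel]

section Expansion

variable {DS DT : ℕ} (hDS : 0 < DS)

theorem colCirc_blockIdx {P : ℕ} (Ms : Fin (DT / DS) → Matrix (Fin P) (Fin DS) ℝ)
    (Mres : Matrix (Fin P) (Fin (DT % DS)) ℝ) (i : Fin P) (l : Fin (DT / DS)) (s : Fin DS) :
    colCirc DS DT P hDS Ms Mres i (blockIdx l s) = Ms l i s := by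
  have hdiv : (s + DS * l : ℕ) / DS = l := by
    rw [Nat.add_mul_div_left _ _ hDS, Nat.div_eq_of_lt s.isLt, Nat.zero_add]
  have hmod : (s + DS * l : ℕ) % DS = s := by
    rw [Nat.add_mul_mod_self_left, Nat.mod_eq_of_lt s.isLt]
  simp only [colCirc, dif_pos (blockIdx_lt_div_mul l s)]
  simp only [val_blockIdx, hdiv, hmod]

theorem colCirc_tailIdx {P : ℕ} (Ms : Fin (DT / DS) → Matrix (Fin P) (Fin DS) ℝ)
    (Mres : Matrix (Fin P) (Fin (DT % DS)) ℝ) (i : Fin P) (t : Fin (DT % DS)) :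
    colCirc DS DT P hDS Ms Mres i (tailIdx t) = Mres i t := by
  simp [colCirc, val_tailIdx]

theorem vCirc_blockIdx (x : Fin DS → ℝ) (l : Fin (DT / DS)) (s : Fin DS) :
    vCirc DS DT hDS x (blockIdx l s) = x s := by
  simp [vCirc, val_blockIdx, Nat.mod_eq_of_lt s.isLt]

theorem vCirc_tailIdx (x : Fin DS → ℝ) (t : Fin (DT % DS)) :
    vCirc DS DT hDS x (tailIdx t) = x (Fin.castLE (Nat.mod_lt DT hDS).le t) := by
  simp only [vCirc, val_tailIdx, Nat.mul_add_mod_self_right,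
    Nat.mod_eq_of_lt (t.isLt.trans (Nat.mod_lt DT hDS))]
  rfl

theorem colCirc_mulVec_vCirc {P : ℕ} (Ms : Fin (DT / DS) → Matrix (Fin P) (Fin DS) ℝ)
    (Mres : Matrix (Fin P) (Fin (DT % DS)) ℝ) (x : Fin DS → ℝ) :
    colCirc DS DT P hDS Ms Mres *ᵥ vCirc DS DT hDS x
      = (∑ l, Ms l) *ᵥ x + Mres *ᵥ (x ∘ Fin.castLE (Nat.mod_lt DT hDS).le) := by
  ext i
  rw [sum_mulVec]
  simp only [mulVec, dotProduct, Pi.add_apply, Finset.sum_apply, Function.comp_apply]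
  rw [sum_eq_sum_blockIdx_add_sum_tailIdx (D := DS)]
  simp only [colCirc_blockIdx, colCirc_tailIdx, vCirc_blockIdx, vCirc_tailIdx]

theorem rowAvg_mulVec {P : ℕ} (N : Matrix (Fin DS) (Fin P) ℝ) (v : Fin P → ℝ) :
    rowAvg DS DT P hDS N *ᵥ v = vAvg DS DT hDS (N *ᵥ v) := by
  ext i
  by_cases h : i.val < DT / DS * DS
  · simp only [rowAvg, vAvg, mulVec, dotProduct, h, if_true]
  · simp only [rowAvg, vAvg, mulVec, dotProduct, h, if_false, div_mul_eq_mul_div,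
      Finset.sum_mul, ← Finset.sum_div]
    rw [Finset.sum_comm]

theorem vAvg_add (x y : Fin DS → ℝ) :
    vAvg DS DT hDS (x + y) = vAvg DS DT hDS x + vAvg DS DT hDS y := by
  ext i
  simp only [vAvg, Pi.add_apply]
  split_ifs
  · rfl
  · rw [Finset.sum_add_distrib, add_div]

end Expansion

theorem stmt_12_general (DS DT : ℕ) (hDS : 0 < DS)
    (M : Matrix (Fin DS) (Fin DS) ℝ) (b : Fin DS → ℝ)
    (Ms : Fin (DT / DS) → Matrix (Fin DS) (Fin DS) ℝ)
    (Mres : Matrix (Fin DS) (Fin (DT % DS)) ℝ)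
    (hres : ∀ (i : Fin DS) (j : Fin (DT % DS)),
      Mres i j + ∑ l, Ms l i ⟨j.val, j.isLt.trans (Nat.mod_lt DT hDS)⟩
        = M i ⟨j.val, j.isLt.trans (Nat.mod_lt DT hDS)⟩)
    (hrest : ∀ (i : Fin DS) (j : Fin DS), DT % DS ≤ j.val → ∑ l, Ms l i j = M i j)
    (x : Fin DS → ℝ) :
    (rowAvg DS DT DT hDS (colCirc DS DT DS hDS Ms Mres)).mulVec (vCirc DS DT hDS x)
        + vAvg DS DT hDS b
      = vAvg DS DT hDS (M.mulVec x + b) := by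
  rw [rowAvg_mulVec, colCirc_mulVec_vCirc,
    sum_mulVec_add_mulVec_comp_castLE _ M Ms Mres hres hrest, vAvg_add]

/-- simultaneous row and column expansion; projection-matrix
expansion: if `N = [M¹, …, M^k, M^res]` is a column-circular expansion of `M` and
`M**` is the row-average expansion of `N`, then
`M**·V_circ(x) + V_avg(b) = V_avg(M·x + b)`. -/
theorem stmt_12 (DS DT : ℕ) (hDS : 0 < DS) (hDT : DS ≤ DT)
    (M : Matrix (Fin DS) (Fin DS) ℝ) (b : Fin DS → ℝ)
    (Ms : Fin (DT / DS) → Matrix (Fin DS) (Fin DS) ℝ)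
    (Mres : Matrix (Fin DS) (Fin (DT % DS)) ℝ)
    (hres : ∀ (i : Fin DS) (j : Fin (DT % DS)),
      Mres i j + ∑ l, Ms l i ⟨j.val, j.isLt.trans (Nat.mod_lt DT hDS)⟩
        = M i ⟨j.val, j.isLt.trans (Nat.mod_lt DT hDS)⟩)
    (hrest : ∀ (i : Fin DS) (j : Fin DS), DT % DS ≤ j.val → ∑ l, Ms l i j = M i j)
    (x : Fin DS → ℝ) :
    (rowAvg DS DT DT hDS (colCirc DS DT DS hDS Ms Mres)).mulVec (vCirc DS DT hDS x)
        + vAvg DS DT hDS b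
      = vAvg DS DT hDS (M.mulVec x + b) :=
  stmt_12_general DS DT hDS M b Ms Mres hres hrest x
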